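/- Let u : ℝ → ℝ be defined by u(x) = sign(x) if |x| ≥ C* and u(x) = 0 otherwise. Then (1/6)·(∫_ℝ u(x)·(x³ − 3x)·φ(x) dx)² ≥ 0.086. -/

import Mathlib

open MeasureTheory

/-- The standard Gaussian density `φ(x) = (1/√(2π)) e^{-x²/2}`. -/
noncomputable def gphi (x : ℝ) : ℝ := (Real.sqrt (2 * Real.pi))⁻¹ * Real.exp (-(x ^ 2) / 2)

/-- The standard Gaussian CDF `Φ(x) = ∫_{-∞}^x φ(t) dt`. -/
noncomputable def gPhi (x : ℝ) : ℝ := ∫ t in Set.Iic x, gphi t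

/-- The standard Gaussian measure on `ℝ^{n+1}`. -/
noncomputable def gauss (n : ℕ) : Measure (Fin (n + 1) → ℝ) :=
  Measure.pi fun _ => ProbabilityTheory.gaussianReal 0 1

/-- The multivariate probabilists' Hermite polynomial `He_α(x) = ∏ᵢ He_{αᵢ}(xᵢ)`. -/
noncomputable def hermiteProd {m : ℕ} (α : Fin m → ℕ) (x : Fin m → ℝ) : ℝ :=
  ∏ i, Polynomial.aeval (x i) (Polynomial.hermite (α i))

/-- The factorial of a multi-index, `α! = ∏ᵢ αᵢ!`. -/
def mfact {m : ℕ} (α : Fin m → ℕ) : ℕ := ∏ i, Nat.factorial (α i)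

/-- A Davie–Reeds strip pair in direction `x₁`, up to a `γ`-null set. -/
def StripPair (n : ℕ) (Cstar : ℝ) (f g : (Fin (n + 1) → ℝ) → ℝ) : Prop :=
  ∀ᵐ x ∂(gauss n),
    (Cstar ≤ x 0 → f x = 1 ∧ g x = 1) ∧
    (x 0 ≤ -Cstar → f x = -1 ∧ g x = -1) ∧
    (|x 0| < Cstar → g x = -f x)

open Set Real



lemma sqrt2pi_pos : 0 < Real.sqrt (2 * Real.pi) := Real.sqrt_pos.2 (by positivity)

lemma gphi_pos (x : ℝ) : 0 < gphi x := by
  unfold gphi; positivity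

lemma gphi_even (x : ℝ) : gphi (-x) = gphi x := by
  unfold gphi; rw [neg_pow]; norm_num

lemma gphi_anti {x y : ℝ} (hx : 0 ≤ x) (hxy : x ≤ y) : gphi y ≤ gphi x := by
  unfold gphi
  have : Real.exp (-(y^2)/2) ≤ Real.exp (-(x^2)/2) := by
    apply Real.exp_le_exp.2; nlinarith
  have h := sqrt2pi_pos
  exact mul_le_mul_of_nonneg_left this (by positivity)

lemma integrable_xpow_gphi (n : ℕ) : Integrable (fun x : ℝ => x ^ n * gphi x) := by
  have h := integrable_rpow_mul_exp_neg_mul_sq (b := 1/2) (by norm_num) (s := (n : ℝ))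
    (by exact lt_of_lt_of_le (by norm_num) (Nat.cast_nonneg n))
  simp_rw [Real.rpow_natCast] at h
  have heq : (fun x : ℝ => x ^ n * gphi x)
      = fun x : ℝ => (Real.sqrt (2 * Real.pi))⁻¹ * (x ^ n * Real.exp (-(1/2) * x ^ 2)) := by
    funext x
    unfold gphi
    rw [show -(x^2)/2 = -(1/2) * x^2 by ring]
    ring
  rw [heq]
  exact h.const_mul _

lemma integrable_cube_gphi : Integrable (fun x : ℝ => (x ^ 3 - 3 * x) * gphi x) := by
  have h := (integrable_xpow_gphi 3).sub ((integrable_xpow_gphi 1).const_mul 3)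
  have heq : (fun x : ℝ => (x ^ 3 - 3 * x) * gphi x)
      = fun x : ℝ => x ^ 3 * gphi x - 3 * (x ^ 1 * gphi x) := by
    funext x; ring
  rw [heq]; exact h

lemma integrable_gphi : Integrable gphi := by
  have h := integrable_xpow_gphi 0
  simpa using h

lemma integral_gphi : ∫ x : ℝ, gphi x = 1 := by
  have heq : (fun x : ℝ => gphi x)
      = fun x : ℝ => (Real.sqrt (2 * Real.pi))⁻¹ * Real.exp (-(1/2) * x ^ 2) := by
    funext x; unfold gphi; rw [show -(x^2)/2 = -(1/2) * x^2 by ring]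
  rw [show (∫ x : ℝ, gphi x) = ∫ x : ℝ, (Real.sqrt (2 * Real.pi))⁻¹ * Real.exp (-(1/2) * x ^ 2) by
    rw [← heq]]
  rw [MeasureTheory.integral_const_mul, integral_gaussian]
  rw [show Real.pi / (1/2) = 2 * Real.pi by ring]
  exact inv_mul_cancel₀ (ne_of_gt sqrt2pi_pos)



lemma integral_Ioi_gphi_zero : ∫ x in Set.Ioi (0:ℝ), gphi x = 1/2 := by
  have hsym : ∫ x in Set.Iic (0:ℝ), gphi x = ∫ x in Set.Ioi (0:ℝ), gphi x := by
    rw [← neg_zero, ← integral_comp_neg_Ioi]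
    simp_rw [gphi_even]
    rw [neg_zero]
  have htot := intervalIntegral.integral_Iic_add_Ioi (b := (0:ℝ))
    integrable_gphi.integrableOn integrable_gphi.integrableOn
  rw [integral_gphi] at htot
  linarith [htot, hsym]

lemma integral_Iic_neg_gphi {C : ℝ} (hC : 0 < C) :
    ∫ x in Set.Iic (-C), gphi x = 1/2 - ∫ x in Set.Ioc (0:ℝ) C, gphi x := by
  have h1 : ∫ x in Set.Iic (-C), gphi x = ∫ x in Set.Ioi C, gphi x := by
    rw [← integral_comp_neg_Ioi]
    simp_rw [gphi_even]
  have hsplit : (∫ x in Set.Ioc (0:ℝ) C, gphi x) + ∫ x in Set.Ioi C, gphi x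
      = ∫ x in Set.Ioi (0:ℝ), gphi x := by
    rw [← setIntegral_union (Set.Ioc_disjoint_Ioi le_rfl) measurableSet_Ioi
      integrable_gphi.integrableOn integrable_gphi.integrableOn]
    rw [Set.Ioc_union_Ioi_eq_Ioi hC.le]
  rw [h1]
  rw [integral_Ioi_gphi_zero] at hsplit
  linarith

lemma gPhi_neg {C : ℝ} (hC : 0 < C) :
    gPhi (-C) = 1/2 - ∫ x in Set.Ioc (0:ℝ) C, gphi x := integral_Iic_neg_gphi hC

lemma hasDerivAt_G (x : ℝ) :
    HasDerivAt (fun y : ℝ => (1 - y ^ 2) * gphi y) ((x ^ 3 - 3 * x) * gphi x) x := by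
  have h1 : HasDerivAt (fun y : ℝ => -(y ^ 2) / 2) (-x) x := by
    have := ((hasDerivAt_pow 2 x).neg).div_const 2
    simpa using this.congr_deriv (by ring)
  have h2 := h1.exp
  have h3 := h2.const_mul (Real.sqrt (2 * Real.pi))⁻¹
  have h4 : HasDerivAt (fun y : ℝ => 1 - y ^ 2) (-(2 * x)) x := by
    simpa using ((hasDerivAt_pow 2 x).const_sub 1).congr_deriv (by ring)
  have h5 := h4.mul h3
  refine h5.congr_deriv ?_
  unfold gphi
  ring

lemma tendsto_G : Filter.Tendsto (fun y : ℝ => (1 - y ^ 2) * gphi y) Filter.atTop (nhds 0) := by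
  have hsq : Filter.Tendsto (fun y : ℝ => y ^ 2 / 2) Filter.atTop Filter.atTop := by
    apply Filter.Tendsto.atTop_div_const (by norm_num : (0:ℝ) < 2)
    exact (Filter.tendsto_id.atTop_mul_atTop₀ Filter.tendsto_id).congr (fun y => (sq y).symm)
  have hA : Filter.Tendsto (fun y : ℝ => (y ^ 2 / 2) ^ 1 * Real.exp (-(y ^ 2 / 2)))
      Filter.atTop (nhds 0) :=
    (Real.tendsto_pow_mul_exp_neg_atTop_nhds_zero 1).comp hsq
  have hB : Filter.Tendsto (fun y : ℝ => Real.exp (-(y ^ 2 / 2))) Filter.atTop (nhds 0) :=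
    Real.tendsto_exp_atBot.comp (Filter.tendsto_neg_atTop_atBot.comp hsq)
  have h := ((hB.const_mul ((Real.sqrt (2 * Real.pi))⁻¹)).sub
    (hA.const_mul (2 * (Real.sqrt (2 * Real.pi))⁻¹)))
  rw [mul_zero, mul_zero, sub_zero] at h
  apply h.congr
  intro y
  unfold gphi
  rw [show -(y ^ 2) / 2 = -(y ^ 2 / 2) by ring]
  ring

lemma integral_Ioi_cube (C : ℝ) :
    ∫ x in Set.Ioi C, (x ^ 3 - 3 * x) * gphi x = (C ^ 2 - 1) * gphi C := by
  have h := MeasureTheory.integral_Ioi_of_hasDerivAt_of_tendsto'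
    (f := fun y : ℝ => (1 - y ^ 2) * gphi y) (f' := fun x => (x ^ 3 - 3 * x) * gphi x) (a := C)
    (fun x _ => hasDerivAt_G x) integrable_cube_gphi.integrableOn tendsto_G
  rw [h]; ring

lemma key_integral (C : ℝ) (hC : 0 < C) (u : ℝ → ℝ)
    (hu : ∀ x, u x = if C ≤ |x| then Real.sign x else 0) :
    ∫ x : ℝ, u x * (x ^ 3 - 3 * x) * gphi x = 2 * ((C ^ 2 - 1) * gphi C) := by
  set f : ℝ → ℝ := fun x => (x ^ 3 - 3 * x) * gphi x with hf
  have hind : ∀ x, u x * (x ^ 3 - 3 * x) * gphi x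
      = Set.indicator (Set.Ici C) f x - Set.indicator (Set.Iic (-C)) f x := by
    intro x
    rw [hu x]
    rcases le_or_gt C |x| with h | h
    · rcases le_abs'.mp h with hx | hx
      · -- x ≤ -C
        have hx1 : x < 0 := lt_of_le_of_lt hx (by linarith)
        have hmem : x ∈ Set.Iic (-C) := hx
        have hnot : x ∉ Set.Ici C := by simp [Set.mem_Ici]; linarith
        rw [if_pos h, Real.sign_of_neg hx1, Set.indicator_of_mem hmem,
          Set.indicator_of_notMem hnot]
        simp [hf]; ring
      · -- C ≤ x
        have hx1 : 0 < x := lt_of_lt_of_le hC hx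
        have hmem : x ∈ Set.Ici C := hx
        have hnot : x ∉ Set.Iic (-C) := by simp [Set.mem_Iic]; linarith
        rw [if_pos h, Real.sign_of_pos hx1, Set.indicator_of_mem hmem,
          Set.indicator_of_notMem hnot]
        simp [hf]
    · have h1 : x ∉ Set.Ici C := by
        simp only [Set.mem_Ici, not_le]
        calc x ≤ |x| := le_abs_self x
        _ < C := h
      have h2 : x ∉ Set.Iic (-C) := by
        simp only [Set.mem_Iic, not_le]
        have := neg_abs_le x
        linarith [abs_lt.mp h]
      rw [if_neg (not_le.mpr h), Set.indicator_of_notMem h1, Set.indicator_of_notMem h2]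
      ring
  have hint : Integrable f := integrable_cube_gphi
  calc ∫ x : ℝ, u x * (x ^ 3 - 3 * x) * gphi x
      = ∫ x : ℝ, (Set.indicator (Set.Ici C) f x - Set.indicator (Set.Iic (-C)) f x) := by
        congr 1; funext x; exact hind x
    _ = (∫ x : ℝ, Set.indicator (Set.Ici C) f x) - ∫ x : ℝ, Set.indicator (Set.Iic (-C)) f x :=
        integral_sub (hint.indicator measurableSet_Ici) (hint.indicator measurableSet_Iic)
    _ = (∫ x in Set.Ici C, f x) - ∫ x in Set.Iic (-C), f x := by
        rw [integral_indicator measurableSet_Ici, integral_indicator measurableSet_Iic]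
    _ = (∫ x in Set.Ioi C, f x) - ∫ x in Set.Iic (-C), f x := by
        rw [MeasureTheory.integral_Ici_eq_integral_Ioi]
    _ = 2 * ((C ^ 2 - 1) * gphi C) := by
        have hodd : ∫ x in Set.Iic (-C), f x = - ∫ x in Set.Ioi C, f x := by
          rw [← integral_comp_neg_Ioi]
          rw [← MeasureTheory.integral_neg]
          congr 1; funext x
          simp only [hf, gphi_even]
          ring
        rw [hodd, integral_Ioi_cube]
        ring


lemma sqrt2pi_sq : Real.sqrt (2 * Real.pi) ^ 2 = 2 * Real.pi :=
  Real.sq_sqrt (by positivity)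

lemma sqrt2pi_bounds :
    2.5066280 ≤ Real.sqrt (2 * Real.pi) ∧ Real.sqrt (2 * Real.pi) ≤ 2.5066288 := by
  have h1 := Real.pi_gt_d6
  have h2 := Real.pi_lt_d6
  have hs := sqrt2pi_sq
  have hp := sqrt2pi_pos
  constructor <;> nlinarith [sq_nonneg (Real.sqrt (2 * Real.pi) - 2.5066280),
    sq_nonneg (Real.sqrt (2 * Real.pi) - 2.5066288)]

lemma gphi_mul_sqrt (x : ℝ) :
    Real.sqrt (2 * Real.pi) * gphi x = Real.exp (-(x ^ 2) / 2) := by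
  unfold gphi
  rw [← mul_assoc, mul_inv_cancel₀ (ne_of_gt sqrt2pi_pos), one_mul]

lemma gphi_lb (x : ℝ) : 1 - x ^ 2 / 2 ≤ Real.sqrt (2 * Real.pi) * gphi x := by
  rw [gphi_mul_sqrt]
  have := Real.add_one_le_exp (-(x ^ 2) / 2)
  linarith

lemma riemann_lb {a b : ℝ} (ha : 0 ≤ a) (hab : a ≤ b) :
    (b - a) * gphi b ≤ ∫ x in Set.Ioc a b, gphi x := by
  have h := setIntegral_ge_of_const_le_real (μ := volume) (c := gphi b) (s := Set.Ioc a b)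
    measurableSet_Ioc (by rw [Real.volume_Ioc]; exact ENNReal.ofReal_ne_top)
    (fun x hx => gphi_anti (le_trans ha hx.1.le) hx.2) integrable_gphi.integrableOn
  rw [Real.volume_real_Ioc, max_eq_left (by linarith)] at h
  linarith [h]

lemma stepB_aux (C s g1 g2 g3 gC : ℝ) (hcon : 13/50 < C) (hC1 : C < 1)
    (hslo : 2.5066280 ≤ s) (hshi : s ≤ 2.5066288)
    (hg1 : 1 - (13/150:ℝ)^2/2 ≤ s * g1) (hg2 : 1 - (13/75:ℝ)^2/2 ≤ s * g2)
    (hg3 : 1 - (13/50:ℝ)^2/2 ≤ s * g3) (hgC : 1 - C^2/2 ≤ s * gC) (hgCpos : 0 < gC)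
    (hstar : 13/150*g1 + 13/150*g2 + 13/150*g3 + (C-13/50)*gC + gC^2 ≤ 1/4) : False := by
  have hsp : (0:ℝ) < s := lt_of_lt_of_le (by norm_num) hslo
  have hC : 13/50 ≤ C := hcon.le
  have hkey : s^2/4 < (1-C^2/2)^2 + s*(C-13/50)*(1-C^2/2)
      + (13/150)*((1-(13/150:ℝ)^2/2)+(1-(13/75:ℝ)^2/2)+(1-(13/50:ℝ)^2/2)) * s := by
    nlinarith [sq_nonneg (C-13/50), sq_nonneg (1-C), mul_nonneg (sub_nonneg.2 hC) (sub_nonneg.2 hC1.le),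
      sq_nonneg C, mul_nonneg (mul_nonneg (sub_nonneg.2 hC) (sub_nonneg.2 hC1.le)) (le_trans (by norm_num) hslo),
      sq_nonneg (C*s), sq_nonneg (s - 2.5066280), mul_nonneg (sub_nonneg.2 hslo) (sub_nonneg.2 hC)]
  have h0 : (0:ℝ) ≤ 1 - C ^ 2 / 2 := by nlinarith
  have hsq2 : (1 - C ^ 2 / 2) ^ 2 ≤ s ^ 2 * gC ^ 2 := by
    calc (1 - C ^ 2 / 2) ^ 2 ≤ (s * gC) ^ 2 := by apply pow_le_pow_left₀ h0 hgC
      _ = s ^ 2 * gC ^ 2 := by ring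
  have hm1 : s * (1 - (13/150 : ℝ) ^ 2 / 2) ≤ s ^ 2 * g1 :=
    le_trans (mul_le_mul_of_nonneg_left hg1 hsp.le) (le_of_eq (by ring))
  have hm2 : s * (1 - (13/75 : ℝ) ^ 2 / 2) ≤ s ^ 2 * g2 :=
    le_trans (mul_le_mul_of_nonneg_left hg2 hsp.le) (le_of_eq (by ring))
  have hm3 : s * (1 - (13/50 : ℝ) ^ 2 / 2) ≤ s ^ 2 * g3 :=
    le_trans (mul_le_mul_of_nonneg_left hg3 hsp.le) (le_of_eq (by ring))
  have hm4 : (C - 13/50) * s * (1 - C ^ 2 / 2) ≤ (C - 13/50) * s ^ 2 * gC := by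
    have hc : (0:ℝ) ≤ (C - 13/50) * s := mul_nonneg (sub_nonneg.2 hC) hsp.le
    calc (C - 13/50) * s * (1 - C ^ 2 / 2) = ((C - 13/50) * s) * (1 - C ^ 2 / 2) := by ring
      _ ≤ ((C - 13/50) * s) * (s * gC) := mul_le_mul_of_nonneg_left hgC hc
      _ = (C - 13/50) * s ^ 2 * gC := by ring
  have hstar2 : s ^ 2 * (13/150*g1 + 13/150*g2 + 13/150*g3 + (C-13/50)*gC + gC^2) ≤ s ^ 2 * (1/4) :=
    mul_le_mul_of_nonneg_left hstar (by positivity)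
  have hstar3 : (13/150)*(s^2*g1) + (13/150)*(s^2*g2) + (13/150)*(s^2*g3)
      + ((C-13/50)*s^2*gC) + s^2*gC^2 ≤ s^2/4 :=
    le_trans (le_of_eq (by ring)) (le_trans hstar2 (le_of_eq (by ring)))
  linarith [hstar3, hkey, hsq2, hm1, hm2, hm3, hm4]


lemma stepB {C : ℝ} (hC0 : 0 < C) (hC1 : C < 1)
    (hsum : gphi C ^ 2 + (∫ x in Set.Ioc (0:ℝ) C, gphi x) = 1/4) : C ≤ 13/50 := by
  by_contra hcon
  push_neg at hcon
  have hsplit : (∫ x in Set.Ioc (0:ℝ) C, gphi x)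
      = (∫ x in Set.Ioc (0:ℝ) (13/150), gphi x) + (∫ x in Set.Ioc (13/150:ℝ) (13/75), gphi x)
        + (∫ x in Set.Ioc (13/75:ℝ) (13/50), gphi x) + ∫ x in Set.Ioc (13/50:ℝ) C, gphi x := by
    rw [← setIntegral_union (Set.Ioc_disjoint_Ioc_of_le le_rfl) measurableSet_Ioc
      integrable_gphi.integrableOn integrable_gphi.integrableOn,
      Set.Ioc_union_Ioc_eq_Ioc (by norm_num) (by norm_num)]
    rw [← setIntegral_union (Set.Ioc_disjoint_Ioc_of_le le_rfl) measurableSet_Ioc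
      integrable_gphi.integrableOn integrable_gphi.integrableOn,
      Set.Ioc_union_Ioc_eq_Ioc (by norm_num) (by norm_num)]
    rw [← setIntegral_union (Set.Ioc_disjoint_Ioc_of_le le_rfl) measurableSet_Ioc
      integrable_gphi.integrableOn integrable_gphi.integrableOn,
      Set.Ioc_union_Ioc_eq_Ioc (by norm_num) (by linarith)]
  have r1 := riemann_lb (a := 0) (b := 13/150) le_rfl (by norm_num)
  have r2 := riemann_lb (a := 13/150) (b := 13/75) (by norm_num) (by norm_num)
  have r3 := riemann_lb (a := 13/75) (b := 13/50) (by norm_num) (by norm_num)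
  have r4 := riemann_lb (a := 13/50) (b := C) (by norm_num) (by linarith)
  have hstar : 13/150 * gphi (13/150) + 13/150 * gphi (13/75) + 13/150 * gphi (13/50)
      + (C - 13/50) * gphi C + gphi C ^ 2 ≤ 1/4 := by
    rw [hsplit] at hsum
    have e1 : (13/150 - 0 : ℝ) = 13/150 := by norm_num
    have e2 : (13/75 - 13/150 : ℝ) = 13/150 := by norm_num
    have e3 : (13/50 - 13/75 : ℝ) = 13/150 := by norm_num
    rw [e1] at r1; rw [e2] at r2; rw [e3] at r3
    linarith [r1, r2, r3, r4]
  exact stepB_aux C (Real.sqrt (2 * Real.pi)) (gphi (13/150)) (gphi (13/75)) (gphi (13/50))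
    (gphi C) hcon hC1 sqrt2pi_bounds.1 sqrt2pi_bounds.2
    (gphi_lb _) (gphi_lb _) (gphi_lb _) (gphi_lb _) (gphi_pos _) hstar


lemma finalC (q pi : ℝ) (hq0 : 0 ≤ q) (hq : q ≤ 169/2500)
    (hpilo : 3.14 ≤ pi) (hpi : pi ≤ 3.141593) :
    0.086 ≤ (2/3)*((1-q)^2*(1-q/2)^2)/(2*pi) := by
  rw [le_div_iff₀ (by nlinarith)]
  nlinarith [sq_nonneg q, mul_nonneg hq0 hq0, sq_nonneg (1-q), mul_nonneg (mul_nonneg hq0 hq0) hq0]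


/-- The degree-3 Hermite weight of the outer part `u` of a Davie–Reeds strip function. -/
theorem u_he3_weight
    (Cstar : ℝ) (hCstar : Cstar ∈ Set.Ioo (0 : ℝ) 1)
    (hroot : 4 * gphi Cstar ^ 2 - 4 * gPhi (-Cstar) + 1 = 0)
    (u : ℝ → ℝ) (hu : ∀ x, u x = if Cstar ≤ |x| then Real.sign x else 0) :
    (1 / 6) * (∫ x : ℝ, u x * (x ^ 3 - 3 * x) * gphi x) ^ 2 ≥ 0.086 := by
  obtain ⟨hC0, hC1⟩ := hCstar
  have hsum : gphi Cstar ^ 2 + (∫ x in Set.Ioc (0:ℝ) Cstar, gphi x) = 1/4 := by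
    rw [gPhi_neg hC0] at hroot
    linarith
  have hCle : Cstar ≤ 13/50 := stepB hC0 hC1 hsum
  rw [key_integral Cstar hC0 u hu]
  set q := Cstar ^ 2 with hqdef
  have hq0 : 0 ≤ q := sq_nonneg Cstar
  have hq : q ≤ 169/2500 := by
    rw [hqdef]
    nlinarith
  have hE : 1 - q/2 ≤ Real.exp (-(Cstar ^ 2) / 2) := by
    have := Real.add_one_le_exp (-(Cstar ^ 2) / 2)
    rw [hqdef]; linarith
  have hE0 : (0:ℝ) ≤ 1 - q/2 := by nlinarith
  have hgsq : gphi Cstar ^ 2 = (2 * Real.pi)⁻¹ * (Real.exp (-(Cstar ^ 2) / 2)) ^ 2 := by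
    unfold gphi
    rw [mul_pow, inv_pow, sqrt2pi_sq]
  have hEsq : (1 - q/2) ^ 2 ≤ (Real.exp (-(Cstar ^ 2) / 2)) ^ 2 :=
    pow_le_pow_left₀ hE0 hE 2
  have hpi0 : (0:ℝ) < 2 * Real.pi := by positivity
  have key : (2/3)*((1-q)^2*(1-q/2)^2)/(2*Real.pi) ≤ 1/6 * (2 * ((Cstar ^ 2 - 1) * gphi Cstar)) ^ 2 := by
    have h1 : 1/6 * (2 * ((Cstar ^ 2 - 1) * gphi Cstar)) ^ 2
        = (2/3) * ((1-q)^2 * gphi Cstar ^ 2) := by rw [hqdef]; ring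
    rw [h1, hgsq, div_eq_mul_inv]
    have h2 : (1-q)^2 * (1-q/2)^2 ≤ (1-q)^2 * (Real.exp (-(Cstar ^ 2) / 2)) ^ 2 :=
      mul_le_mul_of_nonneg_left hEsq (sq_nonneg _)
    calc 2/3 * ((1-q)^2*(1-q/2)^2) * (2*Real.pi)⁻¹
        ≤ 2/3 * ((1-q)^2 * (Real.exp (-(Cstar ^ 2) / 2)) ^ 2) * (2*Real.pi)⁻¹ := by
          apply mul_le_mul_of_nonneg_right _ (by positivity)
          linarith
      _ = 2/3 * ((1-q)^2 * ((2*Real.pi)⁻¹ * (Real.exp (-(Cstar ^ 2) / 2)) ^ 2)) := by ring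
  refine le_trans (finalC q Real.pi hq0 hq Real.pi_gt_d2.le Real.pi_lt_d6.le) key
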